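/- Every maximal planar subgraph of K_6 is obtained by removing exactly three edges, which form either a perfect matching or a path of length 3; in particular, up to isomorphism K_6 has exactly two maximal planar subgraphs. -/

import Mathlib

open SimpleGraph

/-- `H` is a minor of `G`: disjoint connected branch sets in `G`, one for each vertex of `H`,
with edges of `H` realized by edges of `G` between the corresponding branch sets. -/
def MinorOf {W V : Type*} (H : SimpleGraph W) (G : SimpleGraph V) : Prop :=
  ∃ f : W → Set V,
    (∀ w, (G.induce (f w)).Connected) ∧
    (Pairwise fun w w' => Disjoint (f w) (f w')) ∧
    (∀ w w', H.Adj w w' → ∃ a ∈ f w, ∃ b ∈ f w', G.Adj a b)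

/-- Planarity, via Wagner's theorem: no `K₅` minor and no `K₃,₃` minor. -/
def IsPlanar {V : Type*} (G : SimpleGraph V) : Prop :=
  ¬ MinorOf (completeGraph (Fin 5)) G ∧
  ¬ MinorOf (completeBipartiteGraph (Fin 3) (Fin 3)) G

/-- `M` is a maximal planar subgraph of `G`: `M` is planar, and inserting any edge of `G`
not in `M` into `M` yields a nonplanar graph. -/
def MaximalPlanarSubgraph {V : Type*} (G : SimpleGraph V) (M : G.Subgraph) : Prop :=
  IsPlanar M.coe ∧
  ∀ ⦃u v : V⦄ (h : G.Adj u v), ¬ M.Adj u v →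
    ¬ IsPlanar (M ⊔ G.subgraphOfAdj h).coe

/-- `G` contains a copy of `H` as a subgraph. -/
def ContainsSubgraph {W V : Type*} (H : SimpleGraph W) (G : SimpleGraph V) : Prop :=
  ∃ f : W → V, Function.Injective f ∧ ∀ a b, H.Adj a b → G.Adj (f a) (f b)

/-!
On six vertices a `K₃,₃` minor is a spanning `K₃,₃` subgraph, and a `K₅` minor is a `K₅`
subgraph or a `K₅` left after contracting one edge, so planarity of `H` becomes a finite
condition on the graph `S = Hᶜ` of missing edges. Suppose `S` contains neither three disjoint
edges nor a path with three edges. Then no vertex has three `S`-neighbours (a contracted `K₅`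
would need seven vertices), hence `S` is a matching (otherwise a `K₃,₃` appears around a vertex
with two `S`-neighbours), and a matching with at most two edges leaves a `K₃,₃` as well. So `Hᶜ`
contains one of the two graphs; since `K₆` minus either of them is planar, maximality makes `Hᶜ`
equal to that copy. Both complements are maximal planar by a direct check, and they are not
isomorphic because only `K₆` minus a path has a vertex adjacent to all others.
-/

section Minor

variable {V W X : Type*} {G : SimpleGraph V} {G' : SimpleGraph W} {H : SimpleGraph X}

theorem MinorOf.map (h : MinorOf H G) (f : G →g G') (hf : Function.Injective f) :
    MinorOf H G' := by
  obtain ⟨B, hconn, hdisj, hadj⟩ := h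
  refine ⟨fun w => f '' B w, fun w => ?_, fun w w' hww => ?_, fun w w' hww => ?_⟩
  · refine (hconn w).map ⟨fun v : B w => ⟨f v, v.1, v.2, rfl⟩, fun hab => f.map_adj hab⟩ ?_
    rintro ⟨_, v, hv, rfl⟩
    exact ⟨⟨v, hv⟩, rfl⟩
  · exact (Set.disjoint_image_iff hf).2 (hdisj hww)
  · obtain ⟨a, ha, b, hb, hab⟩ := hadj w w' hww
    exact ⟨f a, ⟨a, ha, rfl⟩, f b, ⟨b, hb, rfl⟩, f.map_adj hab⟩

theorem MinorOf.of_isContained (h : H ⊑ G) : MinorOf H G := by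
  obtain ⟨f⟩ := h
  refine ⟨fun w => {f w}, fun w => .of_subsingleton, fun w w' hww => ?_,
    fun w w' hww => ⟨f w, rfl, f w', rfl, f.toHom.map_adj hww⟩⟩
  exact Set.disjoint_singleton.2 (f.injective.ne hww)

theorem IsPlanar.of_isContained (hG' : IsPlanar G') (h : G ⊑ G') : IsPlanar G := by
  obtain ⟨f⟩ := h
  exact ⟨fun hm => hG'.1 (hm.map f.toHom f.injective),
    fun hm => hG'.2 (hm.map f.toHom f.injective)⟩

/-- Every vertex of a branch set carries an edge of `M`: inside its branch set, or for a singleton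
branch set, to a neighbouring one. So the branch sets lie in `M.verts`. -/
theorem MinorOf.coe_of_spanningCoe {M : G.Subgraph} (hH : ∀ w, ∃ w', H.Adj w w')
    (h : MinorOf H M.spanningCoe) : MinorOf H M.coe := by
  obtain ⟨B, hconn, hdisj, hadj⟩ := h
  have hmem : ∀ w, ∀ v ∈ B w, v ∈ M.verts := by
    intro w v hv
    by_cases hB : (B w).Nontrivial
    · have := hB.coe_sort
      obtain ⟨u, hu⟩ := (hconn w).preconnected.exists_adj_of_nontrivial ⟨v, hv⟩
      exact M.edge_vert (hu : M.Adj v u)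
    · obtain ⟨w', hw'⟩ := hH w
      obtain ⟨a, ha, b, -, hab⟩ := hadj w w' hw'
      rw [Set.not_nontrivial_iff.1 hB hv ha]
      exact M.edge_vert (hab : M.Adj a b)
  refine ⟨fun w => Subtype.val ⁻¹' B w, fun w => ?_, fun w w' hww => (hdisj hww).preimage _,
    fun w w' hww => ?_⟩
  · refine (hconn w).map ⟨fun v : B w => ⟨⟨v, hmem w v v.2⟩, v.2⟩, fun hab => hab⟩ ?_
    rintro ⟨⟨v, -⟩, hv⟩
    exact ⟨⟨v, hv⟩, rfl⟩
  · obtain ⟨a, ha, b, hb, hab⟩ := hadj w w' hww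
    exact ⟨⟨a, hmem w a ha⟩, ha, ⟨b, hmem w' b hb⟩, hb, hab⟩

theorem eq_of_mem_of_mem_of_pairwise_disjoint {B : X → Set V}
    (hdisj : Pairwise fun w w' => Disjoint (B w) (B w'))
    {v : V} {w w' : X} (hw : v ∈ B w) (hw' : v ∈ B w') : w = w' := by
  by_contra hne
  exact Set.disjoint_left.1 (hdisj hne) hw hw'

theorem isContained_of_branchSets (B : X → Set V) (r : X → V) (hinj : Function.Injective r)
    (hr : ∀ w, ∀ v ∈ B w, v = r w)
    (hadj : ∀ w w', H.Adj w w' → ∃ a ∈ B w, ∃ b ∈ B w', G.Adj a b) : H ⊑ G := by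
  refine ⟨⟨⟨r, fun {w w'} hww => ?_⟩, hinj⟩⟩
  obtain ⟨a, ha, b, hb, hab⟩ := hadj w w' hww
  rwa [← hr w a ha, ← hr w' b hb]

/-- When there are at most as many vertices as branch sets, every branch set is a single
vertex. -/
theorem MinorOf.isContained [Fintype V] [Fintype X] (h : MinorOf H G)
    (hcard : Fintype.card V ≤ Fintype.card X) : H ⊑ G := by
  obtain ⟨B, hconn, hdisj, hadj⟩ := h
  choose r hr using fun w => Set.nonempty_coe_sort.1 (hconn w).nonempty
  have hinj : Function.Injective r := fun w w' hww =>
    eq_of_mem_of_mem_of_pairwise_disjoint hdisj (hr w) (hww ▸ hr w')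
  have hsurj := ((Fintype.bijective_iff_injective_and_card r).2
    ⟨hinj, le_antisymm (Fintype.card_le_of_injective r hinj) hcard⟩).2
  refine isContained_of_branchSets B r hinj (fun w v hv => ?_) hadj
  obtain ⟨w', rfl⟩ := hsurj v
  rw [eq_of_mem_of_mem_of_pairwise_disjoint hdisj hv (hr w')]

theorem adj_of_connected_induce_pair {x y : V} (hxy : x ≠ y)
    (h : (G.induce {x, y}).Connected) : G.Adj x y := by
  have : Nontrivial ({x, y} : Set V) := (Set.nontrivial_pair hxy).coe_sort
  obtain ⟨⟨u, hu⟩, hxu⟩ := h.preconnected.exists_adj_of_nontrivial ⟨x, by simp⟩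
  rcases hu with rfl | rfl
  · exact absurd hxu (G.induce _).irrefl
  · exact hxu

end Minor

theorem SimpleGraph.Subgraph.isPlanar_coe_iff_spanningCoe {V : Type*} {G : SimpleGraph V}
    {M : G.Subgraph} :
    IsPlanar M.coe ↔ IsPlanar M.spanningCoe := by
  have hK5 : ∀ w : Fin 5, ∃ w', (completeGraph (Fin 5)).Adj w w' := by decide
  have hK33 : ∀ w, ∃ w', (completeBipartiteGraph (Fin 3) (Fin 3)).Adj w w' := by
    rintro (i | i)
    exacts [⟨.inr 0, by simp⟩, ⟨.inl 0, by simp⟩]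
  refine ⟨fun h => ⟨fun hm => h.1 (hm.coe_of_spanningCoe hK5),
    fun hm => h.2 (hm.coe_of_spanningCoe hK33)⟩, fun h => h.of_isContained ?_⟩
  exact M.coeEmbeddingSpanningCoe.isContained

def IsMaximalPlanar {V : Type*} (H : SimpleGraph V) : Prop :=
  IsPlanar H ∧ ∀ ⦃u v : V⦄, u ≠ v → ¬H.Adj u v → ¬IsPlanar (H ⊔ edge u v)

theorem maximalPlanarSubgraph_top_iff {V : Type*} {M : (⊤ : SimpleGraph V).Subgraph} :
    MaximalPlanarSubgraph ⊤ M ↔ IsMaximalPlanar M.spanningCoe := by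
  simp only [MaximalPlanarSubgraph, IsMaximalPlanar, Subgraph.isPlanar_coe_iff_spanningCoe,
    Subgraph.sup_spanningCoe, Subgraph.spanningCoe_subgraphOfAdj, top_adj]
  rfl

section SixVertices

variable {V : Type*} {G : SimpleGraph V}

def HasK33Split (G : SimpleGraph V) : Prop :=
  ∃ s : Finset V, s.card = 3 ∧ ∀ p ∈ s, ∀ q ∉ s, G.Adj p q

/-- Contracting the edge `xy` leaves a `K₅` on the contracted vertex and the other vertices. -/
def HasK5Contraction (G : SimpleGraph V) : Prop :=
  ∃ x y, G.Adj x y ∧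
    ∀ a ∉ [x, y], (G.Adj x a ∨ G.Adj y a) ∧ ∀ b ∉ [x, y], a ≠ b → G.Adj a b

variable [Fintype V] [DecidableEq V]

theorem minorOf_K33_iff_hasK33Split (hV : Fintype.card V = 6) :
    MinorOf (completeBipartiteGraph (Fin 3) (Fin 3)) G ↔ HasK33Split G := by
  constructor
  · intro h
    obtain ⟨f⟩ := h.isContained (by simp [hV])
    have hsurj := ((Fintype.bijective_iff_injective_and_card f).2 ⟨f.injective, by simp [hV]⟩).2
    refine ⟨Finset.univ.image (f ∘ Sum.inl), ?_, ?_⟩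
    · rw [Finset.card_image_of_injective (f := f ∘ Sum.inl) _
        (f.injective.comp Sum.inl_injective)]
      simp
    · simp only [Finset.mem_image, Finset.mem_univ, true_and, Function.comp_apply]
      rintro _ ⟨i, rfl⟩ q hq
      obtain ⟨j | j, rfl⟩ := hsurj q
      · exact absurd ⟨j, rfl⟩ hq
      · exact f.toHom.map_adj (by simp)
  · rintro ⟨s, hs, hadj⟩
    have hsc : sᶜ.card = 3 := by rw [Finset.card_compl, hV, hs]
    let a : Fin 3 → V := fun i => (s.equivFinOfCardEq hs).symm i
    let b : Fin 3 → V := fun j => (sᶜ.equivFinOfCardEq hsc).symm j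
    have ha : ∀ i, a i ∈ s := fun i => Finset.coe_mem _
    have hb : ∀ j, b j ∉ s := fun j => Finset.mem_compl.1 (Finset.coe_mem _)
    have hinj : Function.Injective (Sum.elim a b) :=
      (Subtype.val_injective.comp (Equiv.injective _)).sumElim
        (Subtype.val_injective.comp (Equiv.injective _))
        fun i j hij => hb j (hij ▸ ha i)
    refine .of_isContained ⟨⟨⟨Sum.elim a b, fun {w w'} hww => ?_⟩, hinj⟩⟩
    rcases w with i | i <;> rcases w' with j | j
    · simp at hww
    · exact hadj _ (ha i) _ (hb j)
    · exact (hadj _ (ha j) _ (hb i)).symm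
    · simp at hww

theorem minorOf_K5_of_hasK5Contraction (hV : Fintype.card V = 6) (h : HasK5Contraction G) :
    MinorOf (completeGraph (Fin 5)) G := by
  obtain ⟨x, y, hxy, hrest⟩ := h
  have ht : ({x, y}ᶜ : Finset V).card = 4 := by
    rw [Finset.card_compl, hV, Finset.card_pair hxy.ne]
  let c : Fin 4 → V := fun i => (Finset.equivFinOfCardEq ht).symm i
  have hc : ∀ i, c i ∉ [x, y] := fun i => by
    simpa using Finset.mem_compl.1 (Finset.coe_mem ((Finset.equivFinOfCardEq ht).symm i))
  have hcinj : Function.Injective c := Subtype.val_injective.comp (Equiv.injective _)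
  refine ⟨Fin.cons {x, y} fun i => {c i}, fun w => ?_, fun w w' hww => ?_, fun w w' hww => ?_⟩
  · induction w using Fin.cases
    · exact induce_pair_connected_of_adj hxy
    · exact (show (G.induce {c _}).Connected from .of_subsingleton)
  · induction w using Fin.cases <;> induction w' using Fin.cases <;>
      simp only [Fin.cons_zero, Fin.cons_succ, Set.disjoint_singleton_left,
        Set.disjoint_singleton_right]
    · exact absurd rfl hww
    · simpa using hc _
    · simpa using hc _
    · exact hcinj.ne (fun h => hww (h ▸ rfl))
  · rw [top_adj] at hww
    induction w using Fin.cases <;> induction w' using Fin.cases <;>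
      simp only [Fin.cons_zero, Fin.cons_succ]
    · exact absurd rfl hww
    · rcases (hrest _ (hc _)).1 with h | h
      exacts [⟨x, by simp, _, rfl, h⟩, ⟨y, by simp, _, rfl, h⟩]
    · rcases (hrest _ (hc _)).1 with h | h
      exacts [⟨_, rfl, x, by simp, h.symm⟩, ⟨_, rfl, y, by simp, h.symm⟩]
    · exact ⟨_, rfl, _, rfl, (hrest _ (hc _)).2 _ (hc _) (hcinj.ne fun h => hww (h ▸ rfl))⟩

theorem Function.Injective.exists_range_eq_compl_singleton {X : Type*} [Fintype X]
    {r : X → V} (hr : Function.Injective r) (hcard : Fintype.card V = Fintype.card X + 1) :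
    ∃ z, Set.range r = {z}ᶜ := by
  obtain ⟨z, hz⟩ := Finset.card_eq_one.1 (show (Finset.univ.image r)ᶜ.card = 1 by
    rw [Finset.card_compl, Finset.card_image_of_injective _ hr, hcard]; simp)
  refine ⟨z, Set.ext fun v => ?_⟩
  have := Finset.ext_iff.1 hz v
  simp only [Finset.mem_compl, Finset.mem_image, Finset.mem_univ, true_and,
    Finset.mem_singleton] at this
  rw [Set.mem_range, Set.mem_compl_singleton_iff, ne_eq, ← this, not_not]

/-- Five branch sets on six vertices: all singletons except possibly one pair, which is
then an edge to be contracted. -/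
theorem MinorOf.not_cliqueFree_or_hasK5Contraction (hV : Fintype.card V = 6)
    (h : MinorOf (completeGraph (Fin 5)) G) : ¬G.CliqueFree 5 ∨ HasK5Contraction G := by
  obtain ⟨B, hconn, hdisj, hadj⟩ := h
  choose r hr using fun w => Set.nonempty_coe_sort.1 (hconn w).nonempty
  have hinj : Function.Injective r := fun w w' hww =>
    eq_of_mem_of_mem_of_pairwise_disjoint hdisj (hr w) (hww ▸ hr w')
  obtain ⟨z, hz⟩ := hinj.exists_range_eq_compl_singleton (by simp [hV])
  have hrep : ∀ w, ∀ v ∈ B w, v ≠ z → v = r w := by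
    intro w v hv hvz
    obtain ⟨w', rfl⟩ : v ∈ Set.range r := hz ▸ hvz
    rw [eq_of_mem_of_mem_of_pairwise_disjoint hdisj hv (hr w')]
  by_cases hzB : ∃ w₀, z ∈ B w₀
  · obtain ⟨w₀, hw₀⟩ := hzB
    have hrep' : ∀ w ≠ w₀, ∀ v ∈ B w, v = r w := fun w hw v hv =>
      hrep w v hv fun h => hw (eq_of_mem_of_mem_of_pairwise_disjoint hdisj (h ▸ hv) hw₀)
    have hB₀ : B w₀ = {r w₀, z} := Set.Subset.antisymm
      (fun v hv => (em (v = z)).elim .inr fun hvz => .inl (hrep w₀ v hv hvz))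
      (Set.insert_subset (hr w₀) (Set.singleton_subset_iff.2 hw₀))
    have hrz : r w₀ ≠ z := (hz ▸ Set.mem_range_self w₀ : r w₀ ∈ ({z}ᶜ : Set V))
    have hothers : ∀ a ∉ [r w₀, z], ∃ w ≠ w₀, r w = a := by
      intro a ha
      simp only [List.mem_cons, List.not_mem_nil, or_false, not_or] at ha
      obtain ⟨w, rfl⟩ : a ∈ Set.range r := hz ▸ ha.2
      exact ⟨w, fun h => ha.1 (h ▸ rfl), rfl⟩
    refine .inr ⟨r w₀, z, adj_of_connected_induce_pair hrz (hB₀ ▸ hconn w₀), fun a ha => ?_⟩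
    obtain ⟨w, hw, rfl⟩ := hothers a ha
    refine ⟨?_, fun b hb hab => ?_⟩
    · obtain ⟨p, hp, q, hq, hpq⟩ := hadj w₀ w (Ne.symm hw)
      rw [hB₀] at hp
      rw [hrep' w hw q hq] at hpq
      rcases hp with rfl | rfl
      exacts [.inl hpq, .inr hpq]
    · obtain ⟨w', hw', rfl⟩ := hothers b hb
      obtain ⟨p, hp, q, hq, hpq⟩ := hadj w w' fun h => hab (h ▸ rfl)
      rwa [hrep' w hw p hp, hrep' w' hw' q hq] at hpq
  · push Not at hzB
    refine .inl ((not_cliqueFree_iff_top_isContained 5).2 ?_)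
    exact isContained_of_branchSets B r hinj (fun w v hv => hrep w v hv fun h => hzB w (h ▸ hv))
      hadj

theorem isPlanar_iff_of_card_eq_six (hV : Fintype.card V = 6) :
    IsPlanar G ↔ G.CliqueFree 5 ∧ ¬HasK5Contraction G ∧ ¬HasK33Split G := by
  have hK5 : MinorOf (completeGraph (Fin 5)) G ↔ ¬G.CliqueFree 5 ∨ HasK5Contraction G :=
    ⟨MinorOf.not_cliqueFree_or_hasK5Contraction hV, fun h => h.elim
      (fun h => .of_isContained ((not_cliqueFree_iff_top_isContained 5).1 h))
      (minorOf_K5_of_hasK5Contraction hV)⟩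
  rw [IsPlanar, hK5, minorOf_K33_iff_hasK33Split hV]
  tauto

end SixVertices

def matching3 : SimpleGraph (Fin 6) := fromRel fun i j => (i, j) ∈ [(0, 1), (2, 3), (4, 5)]

def path3 : SimpleGraph (Fin 6) := fromRel fun i j => (i, j) ∈ [(0, 1), (1, 2), (2, 3)]

instance : DecidableRel matching3.Adj := inferInstanceAs (DecidableRel (fromRel _).Adj)

instance : DecidableRel path3.Adj := inferInstanceAs (DecidableRel (fromRel _).Adj)

/-- Mathlib's instance is defined by rewriting, which blocks evaluation by `decide`. -/
instance {V : Type*} [DecidableEq V] (s t : V) : DecidableRel (edge s t).Adj :=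
  fun a b => decidable_of_iff _ (edge_adj s t a b).symm

theorem edgeSet_matching3 : matching3.edgeSet = {s(0, 1), s(2, 3), s(4, 5)} := by
  ext e
  induction e using Sym2.ind with | _ a b => ?_
  simp only [matching3, mem_edgeSet, fromRel_adj, Set.mem_insert_iff, Set.mem_singleton_iff,
    Sym2.eq_iff]
  revert a b
  decide

theorem edgeSet_path3 : path3.edgeSet = {s(0, 1), s(1, 2), s(2, 3)} := by
  ext e
  induction e using Sym2.ind with | _ a b => ?_
  simp only [path3, mem_edgeSet, fromRel_adj, Set.mem_insert_iff, Set.mem_singleton_iff,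
    Sym2.eq_iff]
  revert a b
  decide

theorem isMaximalPlanar_compl_of_card_eq_six {V : Type*} [Fintype V] [DecidableEq V]
    (hV : Fintype.card V = 6) {T : SimpleGraph V}
    (hplanar : Tᶜ.CliqueFree 5 ∧ ¬HasK5Contraction Tᶜ ∧ ¬HasK33Split Tᶜ)
    (hmax : ∀ u v, T.Adj u v →
      ¬(Tᶜ ⊔ edge u v).CliqueFree 5 ∨ HasK33Split (Tᶜ ⊔ edge u v)) :
    IsMaximalPlanar Tᶜ := by
  refine ⟨(isPlanar_iff_of_card_eq_six hV).2 hplanar, fun u v huv hT => ?_⟩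
  rw [compl_adj, not_and, not_not] at hT
  rw [isPlanar_iff_of_card_eq_six hV]
  rcases hmax u v (hT huv) with h | h <;> tauto

/-- Adding a matching edge `uv` leaves the other two matching edges inside the two sides of a
`K₃,₃`. -/
theorem isMaximalPlanar_compl_matching3 : IsMaximalPlanar matching3ᶜ := by
  refine isMaximalPlanar_compl_of_card_eq_six (Fintype.card_fin 6) ⟨?_, ?_, ?_⟩ ?_
  · unfold CliqueFree; decide
  · unfold HasK5Contraction; decide
  · unfold HasK33Split; decide
  · have : ∀ u v, matching3.Adj u v → HasK33Split (matching3ᶜ ⊔ edge u v) := by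
      unfold HasK33Split; decide
    exact fun u v huv => .inr (this u v huv)

/-- Adding an end edge of the path leaves two missing edges at one vertex, away from which there
is a `K₅`; adding the middle edge leaves a `K₃,₃`. -/
theorem isMaximalPlanar_compl_path3 : IsMaximalPlanar path3ᶜ := by
  refine isMaximalPlanar_compl_of_card_eq_six (Fintype.card_fin 6) ⟨?_, ?_, ?_⟩ ?_
  · unfold CliqueFree; decide
  · unfold HasK5Contraction; decide
  · unfold HasK33Split; decide
  · unfold CliqueFree HasK33Split; decide

section MissingEdges

variable {V : Type*} {S : SimpleGraph V}

theorem matching3_isContained_of_nodup {a b c d e f : V} (h : [a, b, c, d, e, f].Nodup)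
    (hab : S.Adj a b) (hcd : S.Adj c d) (hef : S.Adj e f) : matching3 ⊑ S := by
  refine ⟨⟨⟨![a, b, c, d, e, f], fun {i j} hij => ?_⟩,
    List.nodup_ofFn.1 (by simpa using h)⟩⟩
  rw [← mem_edgeSet, edgeSet_matching3] at hij
  rcases hij with h | h | h <;> rcases Sym2.eq_iff.1 h with ⟨rfl, rfl⟩ | ⟨rfl, rfl⟩ <;>
    simp [hab, hcd, hef, hab.symm, hcd.symm, hef.symm]

theorem path3_isContained_of_nodup [Fintype V] [DecidableEq V] (hV : Fintype.card V = 6)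
    {a b c d : V} (h : [a, b, c, d].Nodup)
    (hab : S.Adj a b) (hbc : S.Adj b c) (hcd : S.Adj c d) : path3 ⊑ S := by
  obtain ⟨e, f, hef, hcompl⟩ : ∃ e f, e ≠ f ∧ ({a, b, c, d}ᶜ : Finset V) = {e, f} := by
    rw [← Finset.card_eq_two, Finset.card_compl, hV, Finset.card_insert_of_notMem,
      Finset.card_insert_of_notMem, Finset.card_pair] <;> simp_all
  have hnodup : [a, b, c, d, e, f].Nodup := by
    have he : e ∈ ({a, b, c, d}ᶜ : Finset V) := by simp [hcompl]
    have hf : f ∈ ({a, b, c, d}ᶜ : Finset V) := by simp [hcompl]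
    simp only [Finset.mem_compl, Finset.mem_insert, Finset.mem_singleton] at he hf
    simp only [List.nodup_cons, List.mem_cons, List.not_mem_nil] at h ⊢
    grind
  refine ⟨⟨⟨![a, b, c, d, e, f], fun {i j} hij => ?_⟩,
    List.nodup_ofFn.1 (by simpa using hnodup)⟩⟩
  rw [← mem_edgeSet, edgeSet_path3] at hij
  rcases hij with h | h | h <;> rcases Sym2.eq_iff.1 h with ⟨rfl, rfl⟩ | ⟨rfl, rfl⟩ <;>
    simp [hab, hbc, hcd, hab.symm, hbc.symm, hcd.symm]

theorem exists_of_not_hasK5Contraction_compl (h : ¬HasK5Contraction Sᶜ) {x y : V}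
    (hxy : x ≠ y) (hS : ¬S.Adj x y) :
    ∃ a ∉ [x, y], (S.Adj x a ∧ S.Adj y a) ∨ ∃ b ∉ [x, y], S.Adj a b := by
  by_contra! H
  refine h ⟨x, y, ⟨hxy, hS⟩, fun a ha => ⟨?_, fun b hb hab => ⟨hab, (H a ha).2 b hb⟩⟩⟩
  simp only [List.mem_cons, List.not_mem_nil, or_false, not_or] at ha
  simp only [compl_adj]
  by_cases hxa : S.Adj x a
  · exact .inr ⟨Ne.symm ha.2, (H a (by simp [ha])).1 hxa⟩
  · exact .inl ⟨Ne.symm ha.1, hxa⟩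

theorem exists_adj_of_not_hasK33Split_compl (h : ¬HasK33Split Sᶜ) {s : Finset V}
    (hs : s.card = 3) : ∃ p ∈ s, ∃ q ∉ s, S.Adj p q := by
  by_contra! H
  exact h ⟨s, hs, fun p hp q hq => ⟨fun hpq => hq (hpq ▸ hp), H p hp q hq⟩⟩

variable [Fintype V] [DecidableEq V]

theorem exists_adj_ne_of_cliqueFree_compl (hV : Fintype.card V = 6) (h : Sᶜ.CliqueFree 5)
    (v : V) : ∃ p q, p ≠ v ∧ q ≠ v ∧ S.Adj p q := by
  by_contra! hv
  refine h ({v}ᶜ : Finset V)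
    ⟨fun p hp q hq hpq => ⟨hpq, hv p q ?_ ?_⟩, by rw [Finset.card_compl, hV]; rfl⟩ <;>
    simp_all

/-- A missing edge at a neighbour of `v` would extend to a path with three edges, and without
such edges the contracted `K₅` needed at a non-neighbour of `v` would require seven vertices. -/
theorem not_nodup_of_adj_of_adj_of_adj (hV : Fintype.card V = 6) (hP : ¬path3 ⊑ S)
    (h5 : Sᶜ.CliqueFree 5) (hC : ¬HasK5Contraction Sᶜ) {v l₁ l₂ l₃ : V}
    (h₁ : S.Adj v l₁) (h₂ : S.Adj v l₂) (h₃ : S.Adj v l₃) : ¬[l₁, l₂, l₃].Nodup := by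
  intro hl
  have hfar : ∀ p q, S.Adj p q → p ≠ v → q ≠ v → ¬S.Adj v p := by
    intro p q hpq hpv hqv hvp
    obtain ⟨l, hvl, hlp, hlq⟩ : ∃ l, S.Adj v l ∧ l ≠ p ∧ l ≠ q := by
      simp only [List.nodup_cons, List.mem_cons, List.not_mem_nil] at hl
      grind
    refine hP (path3_isContained_of_nodup hV ?_ hpq.symm hvp.symm hvl)
    simp only [List.nodup_cons, List.mem_cons, List.not_mem_nil]
    grind [hpq.ne, hvl.ne]
  obtain ⟨p, q, hpv, hqv, hpq⟩ := exists_adj_ne_of_cliqueFree_compl hV h5 v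
  have hvp := hfar p q hpq hpv hqv
  obtain ⟨a, ha, ⟨hva, hpa⟩ | ⟨b, hb, hab⟩⟩ :=
    exists_of_not_hasK5Contraction_compl hC (Ne.symm hpv) hvp
  · simp only [List.mem_cons, List.not_mem_nil, or_false, not_or] at ha
    exact hfar a p hpa.symm ha.1 hpv hva
  · simp only [List.mem_cons, List.not_mem_nil, or_false, not_or] at ha hb
    have hva := hfar a b hab ha.1 hb.1
    have hvb := hfar b a hab.symm hb.1 ha.1
    have : [v, l₁, l₂, l₃, p, a, b].Nodup := by
      simp only [List.nodup_cons, List.mem_cons, List.not_mem_nil] at hl ⊢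
      grind [hab.ne, h₁.ne, h₂.ne, h₃.ne]
    simpa [hV] using this.length_le_card

theorem eq_of_adj_of_adj_of_not_path3 (hV : Fintype.card V = 6) (hP : ¬path3 ⊑ S)
    (h5 : Sᶜ.CliqueFree 5) (hC : ¬HasK5Contraction Sᶜ) (h33 : ¬HasK33Split Sᶜ) {x y z : V}
    (hxy : S.Adj x y) (hxz : S.Adj x z) : y = z := by
  by_contra hyz
  obtain ⟨p, hp, q, hq, hpq⟩ := exists_adj_of_not_hasK33Split_compl h33
    (s := {x, y, z})
    (by rw [Finset.card_insert_of_notMem, Finset.card_pair hyz]; simp [hxy.ne, hxz.ne])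
  simp only [Finset.mem_insert, Finset.mem_singleton, not_or] at hp hq
  rcases hp with rfl | rfl | rfl
  · refine not_nodup_of_adj_of_adj_of_adj hV hP h5 hC hxy hxz hpq ?_
    simp only [List.nodup_cons, List.mem_cons, List.not_mem_nil]
    grind
  · refine hP (path3_isContained_of_nodup hV ?_ hpq.symm hxy.symm hxz)
    simp only [List.nodup_cons, List.mem_cons, List.not_mem_nil]
    grind [hxy.ne, hxz.ne]
  · refine hP (path3_isContained_of_nodup hV ?_ hpq.symm hxz.symm hxy)
    simp only [List.nodup_cons, List.mem_cons, List.not_mem_nil]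
    grind [hxy.ne, hxz.ne]

theorem matching3_or_path3_isContained_of_isPlanar_compl (hV : Fintype.card V = 6)
    (h : IsPlanar Sᶜ) :
    matching3 ⊑ S ∨ path3 ⊑ S := by
  rw [isPlanar_iff_of_card_eq_six hV] at h
  obtain ⟨h5, hC, h33⟩ := h
  refine or_iff_not_imp_left.2 fun hM => by_contra fun hP => ?_
  have hmatch {x y z : V} : S.Adj x y → S.Adj x z → y = z :=
    eq_of_adj_of_adj_of_not_path3 hV hP h5 hC h33
  have : Nonempty V := Fintype.card_pos_iff.1 (by omega)
  obtain ⟨a, b, -, -, hab⟩ := exists_adj_ne_of_cliqueFree_compl hV h5 (Classical.arbitrary V)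
  obtain ⟨c, d, hca, hda, hcd⟩ := exists_adj_ne_of_cliqueFree_compl hV h5 a
  have hcb : c ≠ b := fun h => hda (hmatch (h ▸ hcd) hab.symm)
  have hdb : d ≠ b := fun h => hca (hmatch (h ▸ hcd.symm) hab.symm)
  obtain ⟨e, f, hef, hcompl⟩ : ∃ e f, e ≠ f ∧ ({a, b, c, d}ᶜ : Finset V) = {e, f} := by
    rw [← Finset.card_eq_two, Finset.card_compl, hV, Finset.card_insert_of_notMem,
      Finset.card_insert_of_notMem, Finset.card_pair hcd.ne] <;>
      simp [hab.ne, hca.symm, hda.symm, hcb.symm, hdb.symm]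
  have hmem : ∀ q, q ∉ ({a, b, c, d} : Finset V) → q = e ∨ q = f := fun q hq => by
    simpa [hcompl] using Finset.mem_compl.2 hq
  have he : e ∉ ({a, b, c, d} : Finset V) :=
    Finset.mem_compl.1 (hcompl ▸ Finset.mem_insert_self e {f})
  have hf : f ∉ ({a, b, c, d} : Finset V) :=
    Finset.mem_compl.1 (hcompl ▸ Finset.mem_insert_of_mem (Finset.mem_singleton_self f))
  simp only [Finset.mem_insert, Finset.mem_singleton, not_or] at he hf
  obtain ⟨p, hp, q, hq, hpq⟩ := exists_adj_of_not_hasK33Split_compl h33 (s := {a, b, e})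
    (by rw [Finset.card_insert_of_notMem, Finset.card_pair (Ne.symm he.2.1)]
        simp [hab.ne, Ne.symm he.1])
  simp only [Finset.mem_insert, Finset.mem_singleton, not_or] at hp hq
  rcases hp with rfl | rfl | rfl
  · exact hq.2.1 (hmatch hpq hab)
  · exact hq.1 (hmatch hpq hab.symm)
  · by_cases hqabcd : q ∈ ({a, b, c, d} : Finset V)
    · simp only [Finset.mem_insert, Finset.mem_singleton] at hqabcd
      rcases hqabcd with rfl | rfl | rfl | rfl
      · exact hq.1 rfl
      · exact hq.2.1 rfl
      · exact he.2.2.2 (hmatch hpq.symm hcd)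
      · exact he.2.2.1 (hmatch hpq.symm hcd.symm)
    · obtain rfl | rfl := hmem q hqabcd
      · exact hq.2.2 rfl
      · refine hM (matching3_isContained_of_nodup ?_ hab hcd hpq)
        simp only [List.nodup_cons, List.mem_cons, List.not_mem_nil]
        grind [hab.ne, hcd.ne]

end MissingEdges

section Classification

variable {V W : Type*}

theorem map_equiv_adj_apply (σ : W ≃ V) (T : SimpleGraph W) (a b : W) :
    (T.map σ.toEmbedding).Adj (σ a) (σ b) ↔ T.Adj a b :=
  (Iso.map σ T).map_adj_iff

theorem compl_map_equiv (σ : W ≃ V) (T : SimpleGraph W) :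
    (T.map σ.toEmbedding)ᶜ = Tᶜ.map σ.toEmbedding := by
  ext a b
  obtain ⟨a, rfl⟩ := σ.surjective a
  obtain ⟨b, rfl⟩ := σ.surjective b
  rw [compl_adj, map_equiv_adj_apply, map_equiv_adj_apply, compl_adj, σ.injective.ne_iff]

theorem IsMaximalPlanar.compl_eq_map {H : SimpleGraph V} {T : SimpleGraph W}
    (hH : IsMaximalPlanar H) (hT : IsPlanar Tᶜ) (σ : W ≃ V)
    (hle : T.map σ.toEmbedding ≤ Hᶜ) : Hᶜ = T.map σ.toEmbedding := by
  refine le_antisymm (fun a b hab => by_contra fun hT' => ?_) hle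
  rw [compl_adj] at hab
  refine hH.2 hab.1 hab.2
    (hT.of_isContained ⟨⟨⟨σ.symm, fun {x y} hxy => ?_⟩, σ.symm.injective⟩⟩)
  refine (compl_adj _ _ _).2 ⟨σ.symm.injective.ne hxy.ne, fun hTxy => ?_⟩
  have hmap : (T.map σ.toEmbedding).Adj x y := by
    simpa using (map_equiv_adj_apply σ T _ _).2 hTxy
  rcases hxy with hxy | hxy
  · exact ((compl_adj _ _ _).1 (hle hmap)).2 hxy
  · obtain ⟨⟨rfl, rfl⟩ | ⟨rfl, rfl⟩, -⟩ := (edge_adj _ _ _ _).1 hxy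
    exacts [hT' hmap, hT' hmap.symm]

theorem IsMaximalPlanar.exists_compl_eq_map [Fintype V] [Fintype W] {H : SimpleGraph V}
    {T : SimpleGraph W} (hcard : Fintype.card W = Fintype.card V) (hH : IsMaximalPlanar H)
    (hT : IsPlanar Tᶜ) (h : T ⊑ Hᶜ) : ∃ σ : W ≃ V, Hᶜ = T.map σ.toEmbedding := by
  obtain ⟨f⟩ := h
  let σ := Equiv.ofBijective f
    ((Fintype.bijective_iff_injective_and_card f).2 ⟨f.injective, hcard⟩)
  refine ⟨σ, hH.compl_eq_map hT σ fun a b hab => ?_⟩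
  obtain ⟨a, rfl⟩ := σ.surjective a
  obtain ⟨b, rfl⟩ := σ.surjective b
  exact f.toHom.map_adj ((map_equiv_adj_apply σ T a b).1 hab)

theorem IsMaximalPlanar.exists_compl_eq_map_matching3_or_path3 [Fintype V] [DecidableEq V]
    {H : SimpleGraph V} (hV : Fintype.card V = 6) (hH : IsMaximalPlanar H) :
    ∃ σ : Fin 6 ≃ V,
      Hᶜ = matching3.map σ.toEmbedding ∨ Hᶜ = path3.map σ.toEmbedding := by
  have hcard : Fintype.card (Fin 6) = Fintype.card V := by simp [hV]
  rcases matching3_or_path3_isContained_of_isPlanar_compl hV ((compl_compl H).symm ▸ hH.1)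
    with h | h
  · obtain ⟨σ, hσ⟩ := hH.exists_compl_eq_map hcard isMaximalPlanar_compl_matching3.1 h
    exact ⟨σ, .inl hσ⟩
  · obtain ⟨σ, hσ⟩ := hH.exists_compl_eq_map hcard isMaximalPlanar_compl_path3.1 h
    exact ⟨σ, .inr hσ⟩

end Classification

theorem edgeSet_top_sdiff {V : Type*} (M : (⊤ : SimpleGraph V).Subgraph) :
    (⊤ : SimpleGraph V).edgeSet \ M.edgeSet = M.spanningCoeᶜ.edgeSet := by
  rw [← top_sdiff, edgeSet_sdiff, Subgraph.edgeSet_spanningCoe]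

theorem ncard_edgeSet_map {V W : Type*} (f : W ↪ V) (T : SimpleGraph W) :
    (T.map f).edgeSet.ncard = T.edgeSet.ncard := by
  rw [edgeSet_map, Set.ncard_image_of_injective _ f.sym2Map.injective]

theorem ncard_edgeSet_matching3 : matching3.edgeSet.ncard = 3 := by
  rw [edgeSet_matching3, Set.ncard_insert_of_notMem, Set.ncard_pair] <;> decide

theorem ncard_edgeSet_path3 : path3.edgeSet.ncard = 3 := by
  rw [edgeSet_path3, Set.ncard_insert_of_notMem, Set.ncard_pair] <;> decide

theorem eq_of_mem_edgeSet_of_mem {V : Type*} {G : SimpleGraph V}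
    (hG : ∀ x y z, G.Adj x y → G.Adj x z → y = z) {e f : Sym2 V} (he : e ∈ G.edgeSet)
    (hf : f ∈ G.edgeSet) {x : V} (hxe : x ∈ e) (hxf : x ∈ f) : e = f := by
  obtain ⟨y, rfl⟩ := Sym2.mem_iff_exists.1 hxe
  obtain ⟨z, rfl⟩ := Sym2.mem_iff_exists.1 hxf
  rw [hG x y z he hf]

theorem SimpleGraph.Iso.isUniversal {V W : Type*} {G : SimpleGraph V} {G' : SimpleGraph W}
    (e : G ≃g G') {v : V} (h : G.IsUniversal v) : G'.IsUniversal (e v) := fun w hw => by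
  obtain ⟨w, rfl⟩ := e.surjective w
  exact e.map_adj_iff.2 (h fun h' => hw (h' ▸ rfl))

theorem isEmpty_iso_compl_matching3_compl_path3 : IsEmpty (matching3ᶜ ≃g path3ᶜ) := by
  have h5 : path3ᶜ.IsUniversal 5 := by unfold IsUniversal; decide
  have hno : ∀ v, ¬matching3ᶜ.IsUniversal v := by unfold IsUniversal; decide
  exact ⟨fun e => hno _ (Iso.isUniversal e.symm h5)⟩

theorem map_matching3_eq_of_adj_of_adj {V : Type*} (σ : Fin 6 ≃ V) {x y z : V}
    (hxy : (matching3.map σ.toEmbedding).Adj x y) (hxz : (matching3.map σ.toEmbedding).Adj x z) :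
    y = z := by
  obtain ⟨x, rfl⟩ := σ.surjective x
  obtain ⟨y, rfl⟩ := σ.surjective y
  obtain ⟨z, rfl⟩ := σ.surjective z
  rw [map_equiv_adj_apply] at hxy hxz
  have key : ∀ x y z, matching3.Adj x y → matching3.Adj x z → y = z := by decide
  rw [key x y z hxy hxz]

theorem edgeSet_map_path3 {V : Type*} (σ : Fin 6 ≃ V) :
    (path3.map σ.toEmbedding).edgeSet = {s(σ 0, σ 1), s(σ 1, σ 2), s(σ 2, σ 3)} := by
  rw [edgeSet_map, edgeSet_path3]
  simp [Set.image_insert_eq]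

theorem SimpleGraph.Subgraph.nonempty_coe_iso_compl {V W : Type*}
    {M : (⊤ : SimpleGraph V).Subgraph} {T : SimpleGraph W} (σ : W ≃ V)
    (hM : M.spanningCoeᶜ = T.map σ.toEmbedding)
    (hT : ∀ i, ∃ j, Tᶜ.Adj i j) : Nonempty (M.coe ≃g Tᶜ) := by
  have hH : M.spanningCoe = Tᶜ.map σ.toEmbedding := by
    rw [← compl_map_equiv, ← hM, compl_compl]
  have hspan : M.IsSpanning := fun v => by
    obtain ⟨i, rfl⟩ := σ.surjective v
    obtain ⟨j, hij⟩ := hT i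
    have : M.spanningCoe.Adj (σ i) (σ j) := hH ▸ (map_equiv_adj_apply σ _ i j).2 hij
    exact M.edge_vert this
  have e := M.spanningCoeEquivCoeOfSpanning hspan
  rw [hH] at e
  exact ⟨e.symm.trans (Iso.map σ Tᶜ).symm⟩

/-- Every maximal planar subgraph of `K₆` is obtained by removing exactly three edges,
which form either a perfect matching (3 pairwise nonadjacent edges) or a path of
length 3; in particular, up to isomorphism `K₆` has exactly two maximal planar
subgraphs. -/
theorem maximalPlanarSubgraphs_of_K6 :
    (∀ M : (⊤ : SimpleGraph (Fin 6)).Subgraph, MaximalPlanarSubgraph ⊤ M →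
      ((⊤ : SimpleGraph (Fin 6)).edgeSet \ M.edgeSet).ncard = 3 ∧
      ((∀ e ∈ (⊤ : SimpleGraph (Fin 6)).edgeSet \ M.edgeSet,
          ∀ f ∈ (⊤ : SimpleGraph (Fin 6)).edgeSet \ M.edgeSet,
            e ≠ f → ∀ x : Fin 6, x ∈ e → x ∉ f) ∨
        (∃ v : Fin 4 → Fin 6, Function.Injective v ∧
          (⊤ : SimpleGraph (Fin 6)).edgeSet \ M.edgeSet =
            {s(v 0, v 1), s(v 1, v 2), s(v 2, v 3)}))) ∧
    (∃ M₁ M₂ : (⊤ : SimpleGraph (Fin 6)).Subgraph,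
      MaximalPlanarSubgraph ⊤ M₁ ∧ MaximalPlanarSubgraph ⊤ M₂ ∧
      IsEmpty (M₁.coe ≃g M₂.coe) ∧
      ∀ M : (⊤ : SimpleGraph (Fin 6)).Subgraph, MaximalPlanarSubgraph ⊤ M →
        Nonempty (M.coe ≃g M₁.coe) ∨ Nonempty (M.coe ≃g M₂.coe)) := by
  have hclass (M : (⊤ : SimpleGraph (Fin 6)).Subgraph) (hM : MaximalPlanarSubgraph ⊤ M) :=
    (maximalPlanarSubgraph_top_iff.1 hM).exists_compl_eq_map_matching3_or_path3
      (Fintype.card_fin 6)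
  let M₁ := toSubgraph (G := ⊤) matching3ᶜ le_top
  let M₂ := toSubgraph (G := ⊤) path3ᶜ le_top
  have e₁ : M₁.coe ≃g matching3ᶜ :=
    (M₁.spanningCoeEquivCoeOfSpanning (toSubgraph.isSpanning _ _)).symm
  have e₂ : M₂.coe ≃g path3ᶜ :=
    (M₂.spanningCoeEquivCoeOfSpanning (toSubgraph.isSpanning _ _)).symm
  refine ⟨fun M hM => ?_, M₁, M₂,
    maximalPlanarSubgraph_top_iff.2 isMaximalPlanar_compl_matching3,
    maximalPlanarSubgraph_top_iff.2 isMaximalPlanar_compl_path3,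
    ⟨fun e => isEmpty_iso_compl_matching3_compl_path3.false (e₁.symm.trans (e.trans e₂))⟩,
    fun M hM => ?_⟩
  · obtain ⟨σ, h | h⟩ := hclass M hM <;> rw [edgeSet_top_sdiff, h]
    · refine ⟨by rw [ncard_edgeSet_map, ncard_edgeSet_matching3],
        .inl fun e he f hf hef x hxe hxf => hef ?_⟩
      exact eq_of_mem_edgeSet_of_mem (fun _ _ _ => map_matching3_eq_of_adj_of_adj σ) he hf hxe hxf
    · refine ⟨by rw [ncard_edgeSet_map, ncard_edgeSet_path3], .inr ⟨σ ∘ ![0, 1, 2, 3],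
        σ.injective.comp (by decide), edgeSet_map_path3 σ⟩⟩
  · obtain ⟨σ, h | h⟩ := hclass M hM
    · exact .inl ((M.nonempty_coe_iso_compl σ h (by decide)).map (·.trans e₁.symm))
    · exact .inr ((M.nonempty_coe_iso_compl σ h (by decide)).map (·.trans e₂.symm))
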